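/- Let Q ⊂ ℙ^{n+1} be a smooth quadric hypersurface of dimension n. Then H^0(Q, Ω^q_Q(q)) = 0 for all 0 < q < n. -/

import Mathlib

open MvPolynomial

/-- Points of complex affine n-space. -/
abbrev CPt (n : ℕ) : Type := Fin n → ℂ

/-- The common zero locus of a set of polynomials. -/
def zeroLocus {n : ℕ} (S : Set (MvPolynomial (Fin n) ℂ)) : Set (CPt n) :=
  {x | ∀ f ∈ S, eval x f = 0}

/-- A (Zariski-)closed algebraic subset of ℂ^n. -/
def IsAlgebraicSet {n : ℕ} (C : Set (CPt n)) : Prop := ∃ S, C = zeroLocus S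

/-- The Zariski tangent space of C at x: the common kernel of the differentials at x of
all polynomials vanishing on C. -/
noncomputable def zTangent {n : ℕ} (C : Set (CPt n)) (x : CPt n) : Submodule ℂ (CPt n) :=
  sInf {K | ∃ f : MvPolynomial (Fin n) ℂ, (∀ y ∈ C, eval y f = 0) ∧
    K = LinearMap.ker (fderiv ℂ (fun y => eval y f) x : CPt n →ₗ[ℂ] ℂ)}

/-- An irreducible algebraic subset of ℂ^n. -/
def IsIrreducibleAlgebraicSet {n : ℕ} (C : Set (CPt n)) : Prop :=
  IsAlgebraicSet C ∧ C.Nonempty ∧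
    ∀ C₁ C₂ : Set (CPt n), IsAlgebraicSet C₁ → IsAlgebraicSet C₂ →
      C ⊆ C₁ ∪ C₂ → C ⊆ C₁ ∨ C ⊆ C₂

/-- C is a cone: stable under all scalar multiplications. -/
def IsCone {n : ℕ} (C : Set (CPt n)) : Prop := ∀ c : ℂ, ∀ x ∈ C, c • x ∈ C


lemma degree_eq_sum_univ {M : Type*} [Fintype M] (m : M →₀ ℕ) :
    m.degree = ∑ i, m i := by
  rw [Finsupp.degree]
  exact Finset.sum_subset (Finset.subset_univ _)
    (fun x _ hx => Finsupp.notMem_support_iff.mp hx)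

lemma deg1_decomp {M : Type*} [Fintype M] [DecidableEq M] (m : M →₀ ℕ)
    (hm : m.degree = 1) : ∃ a, m = Finsupp.single a 1 := by
  have hne : m ≠ 0 := by intro h; rw [h] at hm; simp at hm
  obtain ⟨a, ha⟩ := Finsupp.ne_iff.mp hne
  simp only [Finsupp.coe_zero, Pi.zero_apply] at ha
  have hma : m a = 1 := le_antisymm (hm ▸ Finsupp.le_degree a m) (Nat.one_le_iff_ne_zero.mpr ha)
  refine ⟨a, ?_⟩
  ext b
  rcases eq_or_ne b a with rfl | hb
  · simp [hma]
  · rw [Finsupp.single_apply, if_neg (fun h => hb h.symm)]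
    by_contra hb0
    have h2 : 2 ≤ ∑ i, m i := by
      have : ∑ i ∈ ({a, b} : Finset M), m i ≤ ∑ i, m i :=
        Finset.sum_le_sum_of_subset (Finset.subset_univ _)
      rw [Finset.sum_pair (fun h => hb h.symm)] at this
      omega
    rw [← degree_eq_sum_univ, hm] at h2; omega

lemma deg2_decomp {M : Type*} [Fintype M] [DecidableEq M] (m : M →₀ ℕ)
    (hm : m.degree = 2) : ∃ a b, m = Finsupp.single a 1 + Finsupp.single b 1 := by
  have hne : m ≠ 0 := by intro h; rw [h] at hm; simp at hm
  obtain ⟨a, ha⟩ := Finsupp.ne_iff.mp hne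
  simp only [Finsupp.coe_zero, Pi.zero_apply] at ha
  have hle : Finsupp.single a 1 ≤ m := by
    rw [Finsupp.single_le_iff]; exact Nat.one_le_iff_ne_zero.mpr ha
  have hsum : Finsupp.single a 1 + (m - Finsupp.single a 1) = m := add_tsub_cancel_of_le hle
  have hdeg : (m - Finsupp.single a 1).degree = 1 := by
    have h1 : (Finsupp.single a 1).degree = 1 := by
      rw [degree_eq_sum_univ]
      rw [Finset.sum_eq_single a (fun b _ hb => Finsupp.single_eq_of_ne' (fun h => hb h.symm))
        (fun h => absurd (Finset.mem_univ a) h)]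
      simp
    have h2 := congrArg Finsupp.degree hsum
    rw [degree_eq_sum_univ, degree_eq_sum_univ] at h2
    simp only [Finsupp.add_apply, Finset.sum_add_distrib] at h2
    rw [degree_eq_sum_univ] at h1 hm ⊢
    omega
  obtain ⟨b, hb⟩ := deg1_decomp _ hdeg
  exact ⟨a, b, by rw [← hsum, hb]⟩

lemma degree_eq_sum_univ' {M : Type*} [Fintype M] (m : M →₀ ℕ) :
    m.degree = ∑ i, m i := by
  rw [Finsupp.degree]
  exact Finset.sum_subset (Finset.subset_univ _)
    (fun x _ hx => Finsupp.notMem_support_iff.mp hx)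

/-- the symmetric bilinear form attached to a quadratic polynomial -/
noncomputable def bil {M : ℕ} (f : MvPolynomial (Fin M) ℂ) (x y : Fin M → ℂ) : ℂ :=
  ∑ m ∈ f.support, coeff m f *
    (if h : ∃ ab : Fin M × Fin M, m = Finsupp.single ab.1 1 + Finsupp.single ab.2 1
     then (x h.choose.1 * y h.choose.2 + x h.choose.2 * y h.choose.1) / 2 else 0)

lemma bil_symm {M : ℕ} (f : MvPolynomial (Fin M) ℂ) (x y : Fin M → ℂ) :
    bil f x y = bil f y x := by
  unfold bil; apply Finset.sum_congr rfl; intro m _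
  congr 1
  split
  · ring
  · rfl

lemma bil_smul_right {M : ℕ} (f : MvPolynomial (Fin M) ℂ) (c : ℂ) (x y : Fin M → ℂ) :
    bil f x (c • y) = c * bil f x y := by
  unfold bil; rw [Finset.mul_sum]; apply Finset.sum_congr rfl; intro m _
  split
  · simp only [Pi.smul_apply, smul_eq_mul]; ring
  · ring

lemma bil_add_right {M : ℕ} (f : MvPolynomial (Fin M) ℂ) (x y z : Fin M → ℂ) :
    bil f x (y + z) = bil f x y + bil f x z := by
  unfold bil; rw [← Finset.sum_add_distrib]; apply Finset.sum_congr rfl; intro m _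
  split
  · simp only [Pi.add_apply]; ring
  · ring

lemma prod_pow_single {M : ℕ} (x : Fin M → ℂ) (a : Fin M) :
    (∏ i, x i ^ (Finsupp.single a 1) i) = x a := by
  rw [Finset.prod_eq_single a (fun b _ hb => by
      rw [Finsupp.single_eq_of_ne' (fun h => hb h.symm), pow_zero])
    (fun h => absurd (Finset.mem_univ a) h)]
  simp

lemma prod_pow_decomp {M : ℕ} (x : Fin M → ℂ) (a b : Fin M) :
    (∏ i, x i ^ (Finsupp.single a 1 + Finsupp.single b 1 : Fin M →₀ ℕ) i) = x a * x b := by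
  simp only [Finsupp.add_apply, pow_add]
  rw [Finset.prod_mul_distrib, prod_pow_single, prod_pow_single]

lemma eval_eq_bil {M : ℕ} (f : MvPolynomial (Fin M) ℂ) (hhom : f.IsHomogeneous 2)
    (x : Fin M → ℂ) : eval x f = bil f x x := by
  rw [eval_eq' x f]
  unfold bil
  apply Finset.sum_congr rfl; intro m hm
  have hdeg : m.degree = 2 := by
    rw [Finsupp.degree_eq_weight_one]
    exact hhom (mem_support_iff.mp hm)
  have hex : ∃ ab : Fin M × Fin M, m = Finsupp.single ab.1 1 + Finsupp.single ab.2 1 := by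
    obtain ⟨a, b, hab⟩ := deg2_decomp m hdeg
    exact ⟨(a, b), hab⟩
  rw [dif_pos hex]
  have habm := hex.choose_spec
  have h1 : ∀ i, m i = (Finsupp.single hex.choose.1 1 + Finsupp.single hex.choose.2 1 :
      Fin M →₀ ℕ) i := by
    intro i; conv_lhs => rw [habm]
  congr 1
  calc (∏ i, x i ^ m i)
      = ∏ i, x i ^ (Finsupp.single hex.choose.1 1 + Finsupp.single hex.choose.2 1 :
          Fin M →₀ ℕ) i := Finset.prod_congr rfl (fun i _ => by rw [h1 i])
    _ = x hex.choose.1 * x hex.choose.2 := prod_pow_decomp x _ _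
    _ = (x hex.choose.1 * x hex.choose.2 + x hex.choose.2 * x hex.choose.1) / 2 := by ring

lemma poly_differentiable {M : ℕ} (g : MvPolynomial (Fin M) ℂ) :
    Differentiable ℂ (fun y : Fin M → ℂ => eval y g) := by
  induction g using MvPolynomial.induction_on with
  | C a => simp only [eval_C]; exact differentiable_const (a : ℂ)
  | add p q hp hq => simp only [eval_add]; exact hp.add hq
  | mul_X p i hp =>
      simp only [eval_mul, eval_X]
      exact hp.mul ((ContinuousLinearMap.proj i : (Fin M → ℂ) →L[ℂ] ℂ).differentiable)

lemma bil_bound {M : ℕ} (f : MvPolynomial (Fin M) ℂ) (y z : Fin M → ℂ) :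
    ‖bil f y z‖ ≤ (∑ m ∈ f.support, ‖coeff m f‖) * ‖y‖ * ‖z‖ := by
  unfold bil
  calc ‖∑ m ∈ f.support, coeff m f *
      (if h : ∃ ab : Fin M × Fin M, m = Finsupp.single ab.1 1 + Finsupp.single ab.2 1
       then (y h.choose.1 * z h.choose.2 + y h.choose.2 * z h.choose.1) / 2 else 0)‖
      ≤ ∑ m ∈ f.support, ‖coeff m f *
        (if h : ∃ ab : Fin M × Fin M, m = Finsupp.single ab.1 1 + Finsupp.single ab.2 1
         then (y h.choose.1 * z h.choose.2 + y h.choose.2 * z h.choose.1) / 2 else 0)‖ :=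
        norm_sum_le _ _
    _ ≤ ∑ m ∈ f.support, ‖coeff m f‖ * (‖y‖ * ‖z‖) := by
        apply Finset.sum_le_sum; intro m _
        rw [norm_mul]
        apply mul_le_mul_of_nonneg_left _ (norm_nonneg _)
        split
        · rename_i hEx
          have b1 : ‖y hEx.choose.1 * z hEx.choose.2‖ ≤ ‖y‖ * ‖z‖ := by
            rw [norm_mul]
            exact mul_le_mul (norm_le_pi_norm y _) (norm_le_pi_norm z _) (norm_nonneg _)
              (norm_nonneg _)
          have b2 : ‖y hEx.choose.2 * z hEx.choose.1‖ ≤ ‖y‖ * ‖z‖ := by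
            rw [norm_mul]
            exact mul_le_mul (norm_le_pi_norm y _) (norm_le_pi_norm z _) (norm_nonneg _)
              (norm_nonneg _)
          have b3 := norm_add_le (y hEx.choose.1 * z hEx.choose.2)
            (y hEx.choose.2 * z hEx.choose.1)
          have b4 : ‖(y hEx.choose.1 * z hEx.choose.2 + y hEx.choose.2 * z hEx.choose.1) / 2‖
              = ‖y hEx.choose.1 * z hEx.choose.2 + y hEx.choose.2 * z hEx.choose.1‖ / 2 := by
            rw [norm_div]; norm_num
          rw [b4]; linarith
        · simp [mul_nonneg (norm_nonneg y) (norm_nonneg z)]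
    _ = (∑ m ∈ f.support, ‖coeff m f‖) * ‖y‖ * ‖z‖ := by
        rw [← Finset.sum_mul, mul_assoc]

noncomputable def bilCLM {M : ℕ} (f : MvPolynomial (Fin M) ℂ) (x : Fin M → ℂ) :
    (Fin M → ℂ) →L[ℂ] ℂ :=
  LinearMap.toContinuousLinearMap (IsLinearMap.mk' (fun v => 2 * bil f x v)
    ⟨fun a b => by rw [bil_add_right]; ring,
     fun c a => by rw [bil_smul_right]; simp; ring⟩)

lemma bilCLM_apply {M : ℕ} (f : MvPolynomial (Fin M) ℂ) (x v : Fin M → ℂ) :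
    bilCLM f x v = 2 * bil f x v := rfl

lemma bil_add_left {M : ℕ} (f : MvPolynomial (Fin M) ℂ) (x y z : Fin M → ℂ) :
    bil f (x + y) z = bil f x z + bil f y z := by
  rw [bil_symm, bil_add_right, bil_symm f z x, bil_symm f z y]

lemma bil_smul_left {M : ℕ} (f : MvPolynomial (Fin M) ℂ) (c : ℂ) (x z : Fin M → ℂ) :
    bil f (c • x) z = c * bil f x z := by
  rw [bil_symm, bil_smul_right, bil_symm]

lemma hasFDerivAt_eval {M : ℕ} (f : MvPolynomial (Fin M) ℂ) (hhom : f.IsHomogeneous 2)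
    (x : Fin M → ℂ) : HasFDerivAt (fun y => eval y f) (bilCLM f x) x := by
  rw [hasFDerivAt_iff_isLittleO_nhds_zero]
  have key : ∀ h : Fin M → ℂ, eval (x + h) f - eval x f - bilCLM f x h = bil f h h := by
    intro h
    rw [eval_eq_bil f hhom, eval_eq_bil f hhom, bilCLM_apply, bil_add_left, bil_add_right,
      bil_add_right, bil_symm f h x]
    ring
  simp only [key]
  rw [Asymptotics.isLittleO_iff]
  intro c hc
  set K := ∑ m ∈ f.support, ‖coeff m f‖ with hK
  have hK0 : 0 ≤ K := Finset.sum_nonneg (fun m _ => norm_nonneg _)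
  rw [Metric.eventually_nhds_iff]
  refine ⟨c / (K + 1), by positivity, ?_⟩
  intro h hd
  rw [dist_zero_right] at hd
  calc ‖bil f h h‖ ≤ K * ‖h‖ * ‖h‖ := bil_bound f h h
    _ ≤ c * ‖h‖ := by
        have hd' : ‖h‖ * (K + 1) < c := by
          rw [lt_div_iff₀ (by positivity : (0:ℝ) < K + 1)] at hd; exact hd
        nlinarith [norm_nonneg h, mul_le_mul_of_nonneg_left hd'.le (norm_nonneg h)]

lemma key_expansion {M : ℕ} (B : (Fin M → ℂ) → (Fin M → ℂ) → ℂ)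
    (hsym : ∀ x y, B x y = B y x)
    (haddr : ∀ x y z, B x (y + z) = B x y + B x z)
    (hsmulr : ∀ (c : ℂ) x y, B x (c • y) = c * B x y)
    (hnd : ∀ z, z ≠ 0 → ∃ w, B z w ≠ 0)
    (x : Fin M → ℂ) (hx0 : x ≠ 0) (hxx : B x x = 0) :
    ∃ (nd : ℕ) (b' : Fin nd → (Fin M → ℂ)),
      M ≤ nd + 2 ∧
      (∀ k, B x (b' k) = 0) ∧
      (∀ k l, B (b' k) (b' l) = if k = l then 1 else 0) ∧
      (∀ w, B x w = 0 → ∃ (a : ℂ) (r : Fin nd → ℂ), w = a • x + ∑ k, r k • b' k) := by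
  classical
  have hsubr : ∀ y z w, B y (z - w) = B y z - B y w := by
    intro y z w
    have h : z - w = z + (-1 : ℂ) • w := by rw [neg_smul, one_smul, ← sub_eq_add_neg]
    rw [h, haddr, hsmulr]; ring
  set LB : (Fin M → ℂ) → ((Fin M → ℂ) →ₗ[ℂ] ℂ) :=
    fun z => IsLinearMap.mk' (B z) ⟨haddr z, fun c y => by rw [hsmulr]; rfl⟩ with hLB
  have hLBapp : ∀ z w, LB z w = B z w := fun _ _ => rfl
  -- the partner u
  obtain ⟨u₀, hu₀⟩ := hnd x hx0
  have hu' : ∃ u, B x u = 1 := ⟨(B x u₀)⁻¹ • u₀, by rw [hsmulr, inv_mul_cancel₀ hu₀]⟩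
  obtain ⟨u, hxu⟩ := hu'
  set Φ : (Fin M → ℂ) →ₗ[ℂ] ℂ × ℂ := (LB x).prod (LB u) with hΦ
  set V₀ : Submodule ℂ (Fin M → ℂ) := LinearMap.ker Φ with hV₀
  have hmemV₀ : ∀ z, z ∈ V₀ ↔ B x z = 0 ∧ B u z = 0 := by
    intro z
    simp only [hV₀, LinearMap.mem_ker, hΦ, LinearMap.prod_apply, Function.prod, Prod.mk_eq_zero]
    exact Iff.rfl
  set nd := Module.finrank ℂ V₀ with hnd'
  have hdim : M ≤ nd + 2 := by
    have h1 := LinearMap.finrank_range_add_finrank_ker Φ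
    have h2 : Module.finrank ℂ (LinearMap.range Φ) ≤ 2 := by
      have := Submodule.finrank_le (LinearMap.range Φ)
      simpa using this
    have h3 : Module.finrank ℂ (Fin M → ℂ) = M := Module.finrank_fin_fun ℂ
    have h4 : nd = Module.finrank ℂ (LinearMap.ker Φ) := by rw [hnd', hV₀]
    omega
  set B₀ : LinearMap.BilinForm ℂ V₀ := LinearMap.mk₂ ℂ (fun z w : V₀ => B z w)
    (fun a b c => by
      show B (↑(a + b)) c = B a c + B b c
      rw [Submodule.coe_add, hsym, haddr, hsym (a : Fin M → ℂ), hsym (b : Fin M → ℂ)])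
    (fun c a b => by
      show B (↑(c • a)) b = c • B a b
      rw [Submodule.coe_smul, hsym, hsmulr, hsym]; rfl)
    (fun a b c => by
      show B a (↑(b + c)) = B a b + B a c
      rw [Submodule.coe_add, haddr])
    (fun c a b => by
      show B a (↑(c • b)) = c • B a b
      rw [Submodule.coe_smul, hsmulr]; rfl) with hB₀
  have hB₀app : ∀ z w : V₀, B₀ z w = B (z : Fin M → ℂ) w := fun _ _ => rfl
  have hB₀symm : LinearMap.IsSymm B₀ :=
    LinearMap.BilinForm.isSymm_iff.mp ⟨fun z w => by rw [hB₀app, hB₀app, hsym]⟩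
  obtain ⟨v, hv⟩ := LinearMap.BilinForm.exists_orthogonal_basis hB₀symm
  have hVnd : ∀ j, B₀ (v j) (v j) ≠ 0 := by
    intro j hdj
    have hvj0 : ((v j : V₀) : Fin M → ℂ) ≠ 0 := by
      simpa [Submodule.coe_eq_zero] using v.ne_zero j
    obtain ⟨w', hw'⟩ := hnd _ hvj0
    set w : Fin M → ℂ := w' - B x w' • u - (B u w' - B x w' * B u u) • x with hw
    have hxw : B x w = 0 := by
      rw [hw, hsubr, hsubr, hsmulr, hsmulr, hxu, hxx]; ring
    have huw : B u w = 0 := by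
      rw [hw, hsubr, hsubr, hsmulr, hsmulr, hsym u x, hxu]; ring
    have hzw : B (v j : Fin M → ℂ) w = B (v j : Fin M → ℂ) w' := by
      have h1 : B (v j : Fin M → ℂ) u = 0 := by
        rw [hsym]; exact ((hmemV₀ _).mp (v j).2).2
      have h2 : B (v j : Fin M → ℂ) x = 0 := by
        rw [hsym]; exact ((hmemV₀ _).mp (v j).2).1
      rw [hw, hsubr, hsubr, hsmulr, hsmulr, h1, h2]; ring
    have hwV₀ : w ∈ V₀ := (hmemV₀ w).mpr ⟨hxw, huw⟩
    have hrepr := v.sum_repr ⟨w, hwV₀⟩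
    have hcoe : ((⟨w, hwV₀⟩ : V₀) : Fin M → ℂ)
        = ∑ k, (v.repr ⟨w, hwV₀⟩) k • ((v k : V₀) : Fin M → ℂ) := by
      conv_lhs => rw [← hrepr]
      push_cast
      rfl
    have hexp : B (v j : Fin M → ℂ) w = ∑ k, (v.repr ⟨w, hwV₀⟩) k * B₀ (v j) (v k) :=
      calc B (v j : Fin M → ℂ) w
          = LB (v j : Fin M → ℂ) ((⟨w, hwV₀⟩ : V₀) : Fin M → ℂ) := rfl
        _ = LB (v j : Fin M → ℂ) (∑ k, (v.repr ⟨w, hwV₀⟩) k • ((v k : V₀) : Fin M → ℂ)) := by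
            rw [hcoe]
        _ = ∑ k, (v.repr ⟨w, hwV₀⟩) k * B₀ (v j) (v k) := by
            rw [map_sum]
            exact Finset.sum_congr rfl (fun k _ => by rw [map_smul, hLBapp, hB₀app]; rfl)
    rw [hexp] at hzw
    have hall : ∀ k, (v.repr ⟨w, hwV₀⟩) k * B₀ (v j) (v k) = 0 := by
      intro k
      rcases eq_or_ne k j with rfl | hkj
      · rw [hdj, mul_zero]
      · rw [hv (Ne.symm hkj), mul_zero]
    rw [Finset.sum_congr rfl (fun k _ => hall k), Finset.sum_const_zero] at hzw
    exact hw' hzw.symm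
  have hs : ∀ j : Fin nd, ∃ s : ℂ, s ^ 2 = B₀ (v j) (v j) :=
    fun j => IsAlgClosed.exists_pow_nat_eq _ zero_lt_two
  choose s hs2 using hs
  have hs0 : ∀ j, s j ≠ 0 := by
    intro j hj
    apply hVnd j
    rw [← hs2 j, hj]; ring
  refine ⟨nd, fun j => (s j)⁻¹ • ((v j : V₀) : Fin M → ℂ), hdim, ?_, ?_, ?_⟩
  · intro k
    rw [hsmulr, ((hmemV₀ _).mp (v k).2).1, mul_zero]
  · intro k l
    rw [hsmulr, hsym, hsmulr, hsym]
    rcases eq_or_ne k l with rfl | hkl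
    · rw [if_pos rfl, ← hB₀app, ← hs2 k, ← mul_assoc, ← mul_inv,
        show s k * s k = s k ^ 2 by ring, inv_mul_cancel₀ (pow_ne_zero 2 (hs0 k))]
    · rw [if_neg hkl, ← hB₀app, hv hkl]
      ring
  · intro w hxw
    set a : ℂ := B u w with ha
    have hzmem : w - a • x ∈ V₀ := by
      rw [hmemV₀]
      constructor
      · rw [hsubr, hsmulr, hxx, hxw]; ring
      · rw [hsubr, hsmulr, hsym u x, hxu, ha]; ring
    refine ⟨a, fun k => (v.repr ⟨w - a • x, hzmem⟩) k * s k, ?_⟩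
    have hrepr := v.sum_repr ⟨w - a • x, hzmem⟩
    have hcoe : ((⟨w - a • x, hzmem⟩ : V₀) : Fin M → ℂ)
        = ∑ k, (v.repr ⟨w - a • x, hzmem⟩) k • ((v k : V₀) : Fin M → ℂ) := by
      conv_lhs => rw [← hrepr]
      push_cast
      rfl
    have hterm : ∀ k : Fin nd,
        ((v.repr ⟨w - a • x, hzmem⟩) k * s k) • ((s k)⁻¹ • ((v k : V₀) : Fin M → ℂ))
        = (v.repr ⟨w - a • x, hzmem⟩) k • ((v k : V₀) : Fin M → ℂ) := by
      intro k
      rw [smul_smul, mul_assoc, mul_inv_cancel₀ (hs0 k), mul_one]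
    rw [Finset.sum_congr rfl (fun k _ => hterm k), ← hcoe]
    show w = a • x + (w - a • x)
    abel

lemma bil_sub_right {M : ℕ} (f : MvPolynomial (Fin M) ℂ) (x y z : Fin M → ℂ) :
    bil f x (y - z) = bil f x y - bil f x z := by
  have h : y - z = y + (-1 : ℂ) • z := by rw [neg_smul, one_smul, ← sub_eq_add_neg]
  rw [h, bil_add_right, bil_smul_right]; ring

theorem stmt7 (n : ℕ) (hn : 2 ≤ n) (q : ℕ) (hq0 : 0 < q) (hqn : q < n)
    (f : MvPolynomial (Fin (n + 2)) ℂ) (hhom : f.IsHomogeneous 2)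
    (C : Set (CPt (n + 2))) (hC : C = {x | eval x f = 0})
    (hsmooth : ∀ x ∈ C, x ≠ 0 → fderiv ℂ (fun y => eval y f) x ≠ 0)
    (σ : CPt (n + 2) → (Fin q → CPt (n + 2)) → ℂ)
    (hmult : ∀ x (v : Fin q → CPt (n + 2)) (i : Fin q),
      IsLinearMap ℂ (fun w => σ x (Function.update v i w)))
    (halt : ∀ x (v : Fin q → CPt (n + 2)), (∃ i j, i ≠ j ∧ v i = v j) → σ x v = 0)
    (heuler : ∀ x ∈ C, x ≠ 0 → ∀ v : Fin q → CPt (n + 2),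
      (∀ i, v i ∈ zTangent C x) → (∃ i, v i = x) → σ x v = 0)
    (hequiv : ∀ c : ℂ, c ≠ 0 → ∀ x ∈ C, x ≠ 0 → ∀ v : Fin q → CPt (n + 2),
      (∀ i, v i ∈ zTangent C x) → σ (c • x) v = σ x v)
    (hhol : ∀ x₀ ∈ C, x₀ ≠ 0 →
      ∃ U : Set (CPt (n + 2)), IsOpen U ∧ x₀ ∈ U ∧
        ∃ τ : CPt (n + 2) → (Fin q → CPt (n + 2)) → ℂ,
          (∀ v, DifferentiableOn ℂ (fun y => τ y v) U) ∧
          ∀ x ∈ U ∩ C, x ≠ 0 → ∀ v : Fin q → CPt (n + 2),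
            (∀ i, v i ∈ zTangent C x) → τ x v = σ x v) :
    ∀ x ∈ C, x ≠ 0 → ∀ v : Fin q → CPt (n + 2),
      (∀ i, v i ∈ zTangent C x) → σ x v = 0 := by
  classical
  have hFB : ∀ y : CPt (n + 2), eval y f = bil f y y := eval_eq_bil f hhom
  have hCmem : ∀ y : CPt (n + 2), y ∈ C ↔ bil f y y = 0 := by
    intro y; rw [hC]; simp only [Set.mem_setOf_eq, hFB]
  have hfd : ∀ x : CPt (n + 2), HasFDerivAt (fun y => eval y f) (bilCLM f x) x :=
    hasFDerivAt_eval f hhom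
  have hzt : ∀ x' : CPt (n + 2), zTangent C x' =
      sInf {K | ∃ g : MvPolynomial (Fin (n + 2)) ℂ, (∀ y ∈ C, eval y g = 0) ∧
        K = LinearMap.ker (fderiv ℂ (fun y => eval y g) x' : CPt (n + 2) →ₗ[ℂ] ℂ)} := fun _ => rfl
  have hnd : ∀ z : CPt (n + 2), z ≠ 0 → ∃ w, bil f z w ≠ 0 := by
    intro z hz0
    by_contra hcon
    push_neg at hcon
    have hzC : z ∈ C := (hCmem z).mpr (hcon z)
    apply hsmooth z hzC hz0
    rw [(hfd z).fderiv]
    apply ContinuousLinearMap.ext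
    intro w
    rw [bilCLM_apply, hcon w, mul_zero, ContinuousLinearMap.zero_apply]
  -- isotropic tangent vectors are Zariski tangent
  have hiso : ∀ x ∈ C, ∀ p : CPt (n + 2), bil f x p = 0 → bil f p p = 0 →
      p ∈ zTangent C x := by
    intro x hxC p hxp hpp
    have hxx : bil f x x = 0 := (hCmem x).mp hxC
    rw [hzt, Submodule.mem_sInf]
    rintro K ⟨g, hgvan, rfl⟩
    have hmemC : ∀ t : ℂ, (x + t • p) ∈ C := by
      intro t
      rw [hCmem]
      simp only [bil_add_left, bil_add_right, bil_smul_left, bil_smul_right, hxx, hpp, hxp,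
        bil_symm f p x]
      ring
    have hg0 : (fun t : ℂ => eval (x + t • p) g) = fun _ => (0 : ℂ) :=
      by funext t; exact hgvan _ (hmemC t)
    have hl : HasDerivAt (fun t : ℂ => x + t • p) p 0 := by
      have h1 := ((hasDerivAt_id (0 : ℂ)).smul_const p).const_add x
      simpa using h1
    have hcomp := ((poly_differentiable g) (x + (0 : ℂ) • p)).hasFDerivAt.comp_hasDerivAt 0 hl
    have hzero : HasDerivAt (fun t : ℂ => eval (x + t • p) g) 0 0 := by
      rw [hg0]; exact hasDerivAt_const 0 0
    have hval := hcomp.unique hzero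
    refine LinearMap.mem_ker.mpr ?_
    simpa using hval
  -- tangent space characterization
  have htan : ∀ x ∈ C, x ≠ 0 → ∀ v : CPt (n + 2), (v ∈ zTangent C x ↔ bil f x v = 0) := by
    intro x hxC hx0 v
    constructor
    · intro hv
      have hKmem : LinearMap.ker (fderiv ℂ (fun y => eval y f) x : CPt (n + 2) →ₗ[ℂ] ℂ) ∈
          {K | ∃ g : MvPolynomial (Fin (n + 2)) ℂ, (∀ y ∈ C, eval y g = 0) ∧
            K = LinearMap.ker (fderiv ℂ (fun y => eval y g) x : CPt (n + 2) →ₗ[ℂ] ℂ)} :=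
        ⟨f, fun y hy => by rw [hC] at hy; exact hy, rfl⟩
      rw [hzt, Submodule.mem_sInf] at hv
      have hm := hv _ hKmem
      rw [LinearMap.mem_ker, (hfd x).fderiv, ContinuousLinearMap.coe_coe, bilCLM_apply] at hm
      rcases mul_eq_zero.mp hm with h2 | h2
      · norm_num at h2
      · exact h2
    · intro hv
      obtain ⟨nd, b', hdim, hb'x, hb'on, hspan⟩ := key_expansion (bil f) (bil_symm f)
        (bil_add_right f) (bil_smul_right f) hnd x hx0 ((hCmem x).mp hxC)
      have hxtan : x ∈ zTangent C x :=
        hiso x hxC x ((hCmem x).mp hxC) ((hCmem x).mp hxC)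
      have hb'tan : ∀ k, b' k ∈ zTangent C x := by
        intro k
        have hl : ∃ l, l ≠ k := by
          rcases eq_or_ne k ⟨0, by omega⟩ with rfl | hk
          · exact ⟨⟨1, by omega⟩, by simp [Fin.ext_iff]⟩
          · exact ⟨⟨0, by omega⟩, Ne.symm hk⟩
        obtain ⟨l, hlk⟩ := hl
        have hiso2 : ∀ c : ℂ, c * c = -1 → b' k + c • b' l ∈ zTangent C x := by
          intro c hc
          apply hiso x hxC
          · rw [bil_add_right, bil_smul_right, hb'x, hb'x]; ring
          · simp only [bil_add_left, bil_add_right, bil_smul_left, bil_smul_right]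
            rw [hb'on k k, hb'on k l, hb'on l k, hb'on l l, if_pos (rfl : k = k),
              if_pos (rfl : l = l), if_neg (Ne.symm hlk), if_neg hlk]
            linear_combination hc
        have hkeq : b' k = (2⁻¹ : ℂ) • (b' k + Complex.I • b' l)
            + (2⁻¹ : ℂ) • (b' k + (-Complex.I) • b' l) := by
          module
        rw [hkeq]
        exact Submodule.add_mem _
          (Submodule.smul_mem _ _ (hiso2 _ (by rw [Complex.I_mul_I])))
          (Submodule.smul_mem _ _ (hiso2 _ (by rw [neg_mul_neg, Complex.I_mul_I])))
      obtain ⟨a, r, hvexp⟩ := hspan v hv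
      rw [hvexp]
      exact Submodule.add_mem _ (Submodule.smul_mem _ _ hxtan)
        (Submodule.sum_mem _ (fun k _ => Submodule.smul_mem _ _ (hb'tan k)))
  -- holomorphy along lines inside the cone
  have hline_diff : ∀ (a b : CPt (n + 2)) (w : Fin q → CPt (n + 2)),
      (∀ t : ℂ, a + t • b ∈ C) → (∀ t : ℂ, a + t • b ≠ 0) →
      (∀ (t : ℂ) (i : Fin q), w i ∈ zTangent C (a + t • b)) →
      Differentiable ℂ (fun t : ℂ => σ (a + t • b) w) := by
    intro a b w hmem hne htang t₀
    obtain ⟨U, hUopen, hUmem, τ, hτdiff, hτeq⟩ := hhol (a + t₀ • b) (hmem t₀) (hne t₀)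
    have hcont : Continuous (fun t : ℂ => a + t • b) :=
      continuous_const.add (continuous_id.smul continuous_const)
    have hUopen' : IsOpen ((fun t : ℂ => a + t • b) ⁻¹' U) := hUopen.preimage hcont
    have ht₀mem : t₀ ∈ (fun t : ℂ => a + t • b) ⁻¹' U := hUmem
    have hdiff : DifferentiableAt ℂ (fun t : ℂ => τ (a + t • b) w) t₀ := by
      have h1 : DifferentiableAt ℂ (fun y => τ y w) (a + t₀ • b) :=
        (hτdiff w).differentiableAt (hUopen.mem_nhds hUmem)
      have h2 : DifferentiableAt ℂ (fun t : ℂ => a + t • b) t₀ :=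
        (differentiable_const a |>.add ((differentiable_id).smul_const b)) t₀
      exact h1.comp t₀ h2
    have hev : (fun t : ℂ => σ (a + t • b) w) =ᶠ[nhds t₀] (fun t : ℂ => τ (a + t • b) w) := by
      filter_upwards [hUopen'.mem_nhds ht₀mem] with t ht
      exact (hτeq _ ⟨ht, hmem t⟩ (hne t) w (fun i => htang t i)).symm
    exact hdiff.congr_of_eventuallyEq hev
  -- the key constancy along isotropic lines
  have hconst_line : ∀ x ∈ C, x ≠ 0 → ∀ p : CPt (n + 2), bil f p p = 0 → bil f x p = 0 →
      (∀ c : ℂ, p ≠ c • x) → ∀ w : Fin q → CPt (n + 2),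
      (∀ i, bil f x (w i) = 0 ∧ bil f p (w i) = 0) → σ x w = σ p w := by
    intro x hxC hx0 p hpp hxp hpx w hw
    have hxx : bil f x x = 0 := (hCmem x).mp hxC
    have hp0 : p ≠ 0 := fun h => hpx 0 (by rw [h, zero_smul])
    have hpC : p ∈ C := (hCmem p).mpr hpp
    have hindep : ∀ s t : ℂ, s • x + t • p = 0 → s = 0 ∧ t = 0 := by
      intro s t hst
      rcases eq_or_ne t 0 with rfl | ht
      · rw [zero_smul, add_zero] at hst
        exact ⟨(smul_eq_zero.mp hst).resolve_right hx0, rfl⟩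
      · exfalso
        apply hpx (-(s / t))
        have h1 : t • p = -(s • x) := eq_neg_of_add_eq_zero_right hst
        calc p = t⁻¹ • (t • p) := by rw [smul_smul, inv_mul_cancel₀ ht, one_smul]
          _ = t⁻¹ • (-(s • x)) := by rw [h1]
          _ = (-(s / t)) • x := by
              rw [smul_neg, smul_smul, ← neg_smul]
              congr 1
              field_simp
    have hgmem : ∀ t : ℂ, x + t • p ∈ C := by
      intro t
      rw [hCmem]
      simp only [bil_add_left, bil_add_right, bil_smul_left, bil_smul_right, hxx, hpp, hxp,
        bil_symm f p x]
      ring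
    have hgne : ∀ t : ℂ, x + t • p ≠ 0 := by
      intro t h
      have := hindep 1 t (by rw [one_smul]; exact h)
      simp at this
    have hgtan : ∀ (t : ℂ) (i : Fin q), w i ∈ zTangent C (x + t • p) := by
      intro t i
      rw [htan _ (hgmem t) (hgne t)]
      rw [bil_add_left, bil_smul_left, (hw i).1, (hw i).2]; ring
    have hhmem : ∀ s : ℂ, p + s • x ∈ C := by
      intro s
      rw [hCmem]
      simp only [bil_add_left, bil_add_right, bil_smul_left, bil_smul_right, hxx, hpp, hxp,
        bil_symm f p x]
      ring
    have hhne : ∀ s : ℂ, p + s • x ≠ 0 := by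
      intro s h
      have := hindep s 1 (by rw [one_smul]; exact (add_comm (s • x) p).trans h)
      simp at this
    have hhtan : ∀ (s : ℂ) (i : Fin q), w i ∈ zTangent C (p + s • x) := by
      intro s i
      rw [htan _ (hhmem s) (hhne s)]
      rw [bil_add_left, bil_smul_left, (hw i).1, (hw i).2]; ring
    set g : ℂ → ℂ := fun t => σ (x + t • p) w with hgdef
    set h : ℂ → ℂ := fun s => σ (p + s • x) w with hhdef
    have hgdiff : Differentiable ℂ g := hline_diff x p w hgmem hgne hgtan
    have hhdiff : Differentiable ℂ h := hline_diff p x w hhmem hhne hhtan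
    have hrel : ∀ t : ℂ, t ≠ 0 → g t = h t⁻¹ := by
      intro t ht
      have heq : x + t • p = t • (p + t⁻¹ • x) := by
        rw [smul_add, smul_smul, mul_inv_cancel₀ ht, one_smul]
        exact add_comm x (t • p)
      calc g t = σ (t • (p + t⁻¹ • x)) w := by rw [hgdef]; simp only; rw [heq]
        _ = σ (p + t⁻¹ • x) w :=
            hequiv t ht _ (hhmem t⁻¹) (hhne t⁻¹) w (fun i => hhtan t⁻¹ i)
        _ = h t⁻¹ := rfl
    have hrel' : ∀ s : ℂ, s ≠ 0 → h s = g s⁻¹ := by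
      intro s hs
      rw [hrel s⁻¹ (inv_ne_zero hs), inv_inv]
    have hbdd : Bornology.IsBounded (Set.range g) := by
      have hK1 : IsCompact (g '' Metric.closedBall 0 1) :=
        (isCompact_closedBall (0 : ℂ) 1).image hgdiff.continuous
      have hK2 : IsCompact (h '' Metric.closedBall 0 1) :=
        (isCompact_closedBall (0 : ℂ) 1).image hhdiff.continuous
      apply Bornology.IsBounded.subset (hK1.union hK2).isBounded
      rintro - ⟨t, rfl⟩
      rcases le_or_gt ‖t‖ 1 with ht | ht
      · exact Set.mem_union_left _ ⟨t, by simpa [Metric.mem_closedBall] using ht, rfl⟩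
      · have ht0 : t ≠ 0 := by intro h0; rw [h0] at ht; norm_num at ht
        refine Set.mem_union_right _ ⟨t⁻¹, ?_, (hrel t ht0).symm⟩
        simp only [Metric.mem_closedBall, dist_zero_right, norm_inv]
        rw [inv_le_one_iff₀]
        right; linarith
    have hgconst : ∀ z w' : ℂ, g z = g w' := fun z w' =>
      hgdiff.apply_eq_apply_of_bounded hbdd z w'
    have hh0 : h 0 = g 0 := by
      have h1 : Filter.Tendsto h (nhdsWithin 0 {0}ᶜ) (nhds (g 0)) := by
        have h2 : ∀ᶠ s in nhdsWithin (0 : ℂ) {0}ᶜ, h s = g 0 := by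
          filter_upwards [self_mem_nhdsWithin] with s hs
          rw [hrel' s hs, hgconst s⁻¹ 0]
        exact Filter.Tendsto.congr' (Filter.EventuallyEq.symm h2) tendsto_const_nhds
      have h3 : Filter.Tendsto h (nhdsWithin 0 {0}ᶜ) (nhds (h 0)) :=
        (hhdiff.continuous.continuousAt).tendsto.mono_left nhdsWithin_le_nhds
      exact tendsto_nhds_unique h3 h1
    have hg00 : g 0 = σ x w := by rw [hgdef]; simp only; rw [zero_smul, add_zero]
    have hh00 : h 0 = σ p w := by rw [hhdef]; simp only; rw [zero_smul, add_zero]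
    rw [← hg00, ← hh00, hh0]
  -- derived Euler relation at isotropic tangent directions
  have hAB : ∀ x ∈ C, x ≠ 0 → ∀ p : CPt (n + 2), bil f p p = 0 → bil f x p = 0 →
      (∀ c : ℂ, p ≠ c • x) → ∀ w : Fin q → CPt (n + 2),
      (∀ i, bil f x (w i) = 0 ∧ bil f p (w i) = 0) → (∃ i, w i = p) → σ x w = 0 := by
    intro x hxC hx0 p hpp hxp hpx w hw hex
    have hp0 : p ≠ 0 := fun h => hpx 0 (by rw [h, zero_smul])
    have hpC : p ∈ C := (hCmem p).mpr hpp
    rw [hconst_line x hxC hx0 p hpp hxp hpx w hw]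
    exact heuler p hpC hp0 w (fun i => (htan p hpC hp0 _).mpr (hw i).2) hex
  -- MAIN ARGUMENT
  intro x hxC hx0 v hv
  have hxx : bil f x x = 0 := (hCmem x).mp hxC
  have hvb : ∀ i, bil f x (v i) = 0 := fun i => (htan x hxC hx0 _).mp (hv i)
  obtain ⟨nd, b', hdim, hb'x, hb'on, hspan⟩ := key_expansion (bil f) (bil_symm f)
    (bil_add_right f) (bil_smul_right f) hnd x hx0 hxx
  have hqnd : q < nd := by omega
  have hMex : ∃ Mm : MultilinearMap ℂ (fun _ : Fin q => CPt (n + 2)) ℂ,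
      ∀ w', Mm w' = σ x w' := by
    refine ⟨⟨σ x, ?_, ?_⟩, fun _ => rfl⟩
    · intro dec v' i a b
      rw [Subsingleton.elim dec (instDecidableEqFin q)]
      exact (hmult x v' i).map_add a b
    · intro dec v' i c a
      rw [Subsingleton.elim dec (instDecidableEqFin q)]
      exact (hmult x v' i).map_smul c a
  obtain ⟨Mσ, hMσapp⟩ := hMex
  choose aa rr hvexp using fun i => hspan (v i) (hvb i)
  set β : Option (Fin nd) → CPt (n + 2) := fun o => Option.elim o x b' with hβ
  set coef : Fin q → Option (Fin nd) → ℂ := fun i o => Option.elim o (aa i) (rr i) with hcoef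
  have hsum : ∀ i, v i = ∑ o : Option (Fin nd), coef i o • β o := by
    intro i
    rw [Fintype.sum_option]
    exact hvexp i
  have hmono : ∀ rmap : Fin q → Option (Fin nd), σ x (fun i => β (rmap i)) = 0 := by
    intro rmap
    by_cases hinj : Function.Injective rmap
    · by_cases hnone : ∃ i, rmap i = none
      · obtain ⟨i, hi⟩ := hnone
        apply heuler x hxC hx0
        · intro i'
          rw [htan x hxC hx0]
          cases hr : rmap i' with
          | none => exact hxx
          | some k => exact hb'x k
        · exact ⟨i, by rw [hi]; simp [hβ]⟩
      · push_neg at hnone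
        set j : Fin q → Fin nd := fun i => (rmap i).get (Option.ne_none_iff_isSome.mp (hnone i))
          with hj
        have hrj : ∀ i, rmap i = some (j i) := fun i => (Option.some_get _).symm
        have hjinj : Function.Injective j := by
          intro i1 i2 h12
          apply hinj
          rw [hrj i1, hrj i2, h12]
        have hex0 : ∃ j0 : Fin nd, ∀ i, j i ≠ j0 := by
          by_contra hcon
          push_neg at hcon
          have hne : Finset.image j Finset.univ = Finset.univ := by
            apply Finset.eq_univ_iff_forall.mpr
            intro k
            obtain ⟨i, hi⟩ := hcon k
            exact Finset.mem_image.mpr ⟨i, Finset.mem_univ i, hi⟩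
          have himg : (Finset.image j Finset.univ).card ≤ q := by
            calc (Finset.image j Finset.univ).card ≤ (Finset.univ : Finset (Fin q)).card :=
                  Finset.card_image_le
              _ = q := by simp
          rw [hne] at himg
          simp only [Finset.card_univ, Fintype.card_fin] at himg
          omega
        obtain ⟨j0, hj0⟩ := hex0
        set i₀ : Fin q := ⟨0, hq0⟩ with hi₀
        set j1 : Fin nd := j i₀ with hj1
        have hj10 : j1 ≠ j0 := by rw [hj1]; exact hj0 i₀
        have key : ∀ c : ℂ, c * c = -1 →
            σ x (Function.update (fun i => β (rmap i)) i₀ (b' j1 + c • b' j0)) = 0 := by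
          intro c hc
          set p : CPt (n + 2) := b' j1 + c • b' j0 with hp
          have hppz : bil f p p = 0 := by
            rw [hp]
            simp only [bil_add_left, bil_add_right, bil_smul_left, bil_smul_right]
            rw [hb'on j1 j1, hb'on j1 j0, hb'on j0 j1, hb'on j0 j0, if_pos (rfl : j1 = j1),
              if_pos (rfl : j0 = j0), if_neg hj10, if_neg (Ne.symm hj10)]
            linear_combination hc
          have hxpz : bil f x p = 0 := by
            rw [hp, bil_add_right, bil_smul_right, hb'x, hb'x]; ring
          have hpxz : ∀ c' : ℂ, p ≠ c' • x := by
            intro c' hceq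
            have h1 : bil f p (b' j1) = 1 := by
              rw [hp, bil_add_left, bil_smul_left, hb'on j1 j1, hb'on j0 j1,
                if_pos (rfl : j1 = j1), if_neg (Ne.symm hj10)]
              ring
            rw [hceq, bil_smul_left, hb'x j1, mul_zero] at h1
            norm_num at h1
          apply hAB x hxC hx0 p hppz hxpz hpxz
          · intro i
            rcases eq_or_ne i i₀ with rfl | hii
            · rw [Function.update_self]
              exact ⟨hxpz, hppz⟩
            · rw [Function.update_of_ne hii]
              constructor
              · rw [hrj i]; exact hb'x (j i)
              · rw [hrj i]
                show bil f p (b' (j i)) = 0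
                have hne1 : j1 ≠ j i := by
                  rw [hj1]; intro h; exact hii (hjinj h).symm
                have hne0 : j0 ≠ j i := Ne.symm (hj0 i)
                rw [hp, bil_add_left, bil_smul_left, hb'on j1 (j i), hb'on j0 (j i),
                  if_neg hne1, if_neg hne0]
                ring
          · exact ⟨i₀, Function.update_self i₀ _ _⟩
        have hupdate : (fun i => β (rmap i)) =
            Function.update (fun i => β (rmap i)) i₀ (β (rmap i₀)) :=
          (Function.update_eq_self _ _).symm
        rw [hupdate]
        have hsplit : β (rmap i₀) = (2⁻¹ : ℂ) • (b' j1 + Complex.I • b' j0)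
            + (2⁻¹ : ℂ) • (b' j1 + (-Complex.I) • b' j0) := by
          rw [hrj i₀]
          show b' (j i₀) = _
          rw [← hj1]
          module
        rw [hsplit, (hmult x _ i₀).map_add, (hmult x _ i₀).map_smul, (hmult x _ i₀).map_smul,
          key Complex.I (by rw [Complex.I_mul_I]),
          key (-Complex.I) (by rw [neg_mul_neg, Complex.I_mul_I])]
        simp
    · apply halt
      rw [Function.Injective] at hinj
      push_neg at hinj
      obtain ⟨i1, i2, heq2, hne2⟩ := hinj
      exact ⟨i1, i2, hne2, by rw [heq2]⟩
  have h1 : σ x v = Mσ (fun i => ∑ o : Option (Fin nd), coef i o • β o) := by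
    rw [show (fun i => ∑ o : Option (Fin nd), coef i o • β o) = v from
      funext (fun i => (hsum i).symm)]
    exact (hMσapp v).symm
  rw [h1, MultilinearMap.map_sum]
  apply Finset.sum_eq_zero
  intro rmap _
  have h2 : Mσ (fun i => coef i (rmap i) • β (rmap i)) =
      (∏ i, coef i (rmap i)) • Mσ (fun i => β (rmap i)) :=
    Mσ.map_smul_univ (fun i => coef i (rmap i)) (fun i => β (rmap i))
  rw [h2]
  have h3 : Mσ (fun i => β (rmap i)) = 0 := by
    rw [hMσapp]; exact hmono rmap
  rw [h3, smul_zero]
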